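/- Let μ be a probability distribution on [0,1] with continuous density f such that sup{x : f(x) > 0} = 1, let F be its CDF, and let T < 1 with F(T) < 1. Then there exist constants η > 0 and K > 0 such that for every n ≥ 2, if Y₁,…,Yₙ are i.i.d. with law μ, Y_{(n:n)} is their maximum and Y_{(n-1:n)} their second largest, then E[Y_{(n:n)} − Y_{(n-1:n)} | Y_{(n-1:n)} ≥ T] ≥ K·(F(T) + η)^{n−1}. -/

import Mathlib

/-!
Pick points `T < T₀ < a < b < s < 1` such that `(T, T₀]`, `(T₀, a]` and `(b, s]` all carry
positive mass: they exist because the set where the continuous density is positive is open with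
supremum `1`, so it has points in every interval `(t, 1)`. Consider the event that the first
sample lies in `(b, s]`, the second in `(T₀, a]` and all others in `(-∞, T₀]`. On it the second
largest sample lies in `(T₀, a]`, hence above `T`, and the gap is at least `b - a`; its
probability is `μ(b, s] μ(T₀, a] F(T₀)^(n-2)`. Conditioning divides by a probability at most `1`,
so the conditional gap is at least `(b - a) μ(b, s] μ(T₀, a] F(T₀)^(n-1)`, where
`F(T₀) = F(T) + μ(T, T₀]`: take `η = μ(T, T₀]` and `K = (b - a) μ(b, s] μ(T₀, a]`.
-/

open MeasureTheory Real

/-- The `k`-th smallest value (1-indexed) among `v 0, …, v (n-1)`;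
`ostat v n` is the maximum and `ostat v (n-1)` the second largest. -/
noncomputable def ostat {n : ℕ} (v : Fin n → ℝ) (k : ℕ) : ℝ :=
  (List.insertionSort (· ≤ ·) (List.ofFn v)).getD (k - 1) 0

section OrderStatistics

open Finset

theorem Equiv.Perm.card_filter_univ_comp {ι : Type*} [Fintype ι] (σ : Equiv.Perm ι)
    (p : ι → Prop) [DecidablePred p] : #{i | p (σ i)} = #{i | p i} := by
  simp only [card_filter]
  exact Equiv.sum_comp σ fun i => if p i then 1 else 0

variable {n : ℕ}

theorem ostat_eq_apply_sort (v : Fin n → ℝ) {k : ℕ} (hk : 1 ≤ k) (hkn : k ≤ n) :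
    ostat v k = v (Tuple.sort v ⟨k - 1, by omega⟩) := by
  have hsort : List.insertionSort (· ≤ ·) (List.ofFn v) = List.ofFn (v ∘ Tuple.sort v) :=
    List.Perm.eq_of_sortedLE List.sortedLE_insertionSort (Tuple.monotone_sort v).sortedLE_ofFn
      ((List.perm_insertionSort _ _).trans ((Tuple.sort v).ofFn_comp_perm v).symm)
  simp [ostat, hsort, List.getD_eq_getElem?_getD, show k - 1 < n by omega]

theorem ostat_le_iff (v : Fin n → ℝ) {k : ℕ} (hk : 1 ≤ k) (hkn : k ≤ n) (x : ℝ) :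
    ostat v k ≤ x ↔ k ≤ #{i | v i ≤ x} := by
  rw [ostat_eq_apply_sort v hk hkn, ← (Tuple.sort v).card_filter_univ_comp (v · ≤ x)]
  exact (Tuple.lt_card_le_iff_apply_le_of_monotone (Tuple.monotone_sort v)).symm.trans
    (by simp only [Function.comp_apply]; omega)

theorem ostat_lt_iff (v : Fin n → ℝ) {k : ℕ} (hk : 1 ≤ k) (hkn : k ≤ n) (x : ℝ) :
    ostat v k < x ↔ k ≤ #{i | v i < x} := by
  rw [ostat_eq_apply_sort v hk hkn, ← (Tuple.sort v).card_filter_univ_comp (v · < x)]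
  exact (Tuple.lt_card_lt_iff_apply_lt_of_monotone (Tuple.monotone_sort v)).symm.trans
    (by simp only [Function.comp_apply]; omega)

theorem ostat_mem (v : Fin n → ℝ) {k : ℕ} (hk : 1 ≤ k) (hkn : k ≤ n) {s : Set ℝ}
    (hv : ∀ i, v i ∈ s) : ostat v k ∈ s := by
  rw [ostat_eq_apply_sort v hk hkn]
  exact hv _

theorem ostat_mono (v : Fin n → ℝ) {k l : ℕ} (hk : 1 ≤ k) (hkl : k ≤ l) (hln : l ≤ n) :
    ostat v k ≤ ostat v l := by
  rw [ostat_eq_apply_sort v hk (hkl.trans hln), ostat_eq_apply_sort v (hk.trans hkl) hln]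
  exact Tuple.monotone_sort v (Fin.mk_le_mk.2 (by omega))

theorem apply_le_ostat_last (v : Fin n → ℝ) (i : Fin n) : v i ≤ ostat v n := by
  rw [← not_lt, ostat_lt_iff v i.pos le_rfl, not_le]
  simpa using card_lt_univ_of_notMem (s := {j | v j < v i}) (x := i) (by simp)

theorem le_ostat_sub_one (v : Fin n → ℝ) {i j : Fin n} (hij : i ≠ j) {x : ℝ}
    (hi : x ≤ v i) (hj : x ≤ v j) : x ≤ ostat v (n - 1) := by
  have hn : 1 < n := by simpa using Fintype.one_lt_card_iff.2 ⟨i, j, hij⟩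
  rw [← not_lt, ostat_lt_iff v (by omega) (by omega), not_le]
  calc #{l | v l < x} ≤ #({i, j}ᶜ : Finset (Fin n)) :=
        card_le_card fun l hl => by
          simp only [mem_filter, mem_univ, true_and] at hl
          simp only [mem_compl, mem_insert, mem_singleton, not_or]
          exact ⟨by rintro rfl; linarith, by rintro rfl; linarith⟩
    _ < n - 1 := by rw [card_compl, card_pair hij, Fintype.card_fin]; omega

theorem ostat_sub_one_le (v : Fin n → ℝ) (hn : 2 ≤ n) (i : Fin n) {x : ℝ}
    (hv : ∀ j ≠ i, v j ≤ x) : ostat v (n - 1) ≤ x := by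
  rw [ostat_le_iff v (by omega) (by omega)]
  calc n - 1 = #(univ.erase i) := by
        rw [card_erase_of_mem (mem_univ i), card_univ, Fintype.card_fin]
    _ ≤ #{j | v j ≤ x} := card_le_card fun j hj => by simpa using hv j (ne_of_mem_erase hj)

theorem measurable_ostat {k : ℕ} (hk : 1 ≤ k) (hkn : k ≤ n) :
    Measurable fun v : Fin n → ℝ => ostat v k := by
  refine measurable_of_Iio fun x => ?_
  have hcount : Measurable fun v : Fin n → ℝ => #{i | v i < x} := by
    simp only [card_filter]
    exact Finset.measurable_sum _ fun i _ =>
      Measurable.ite (measurableSet_lt (measurable_pi_apply i) measurable_const)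
        measurable_const measurable_const
  have hpre : (fun v : Fin n → ℝ => ostat v k) ⁻¹' Set.Iio x =
      (fun v : Fin n → ℝ => #{i | v i < x}) ⁻¹' Set.Ici k := by
    ext v
    exact ostat_lt_iff v hk hkn x
  rw [hpre]
  exact hcount measurableSet_Ici

end OrderStatistics

open Set Filter Topology

theorem IsLUB.notMem_of_isOpen {α : Type*} [LinearOrder α] [TopologicalSpace α]
    [OrderTopology α] [DenselyOrdered α] [NoMaxOrder α] {s : Set α} {a : α} (hs : IsOpen s)
    (ha : IsLUB s a) : a ∉ s := fun has =>
  let ⟨_, hys, hay⟩ := (Eventually.and (nhdsWithin_le_nhds (hs.mem_nhds has))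
    (self_mem_nhdsWithin (s := Ioi a))).exists
  (ha.1 hys).not_gt hay

theorem Real.isLUB_sSup_of_ne_zero {s : Set ℝ} (hs : sSup s ≠ 0) : IsLUB s (sSup s) := by
  refine isLUB_csSup ?_ ?_
  · by_contra h
    exact hs (by rw [not_nonempty_iff_eq_empty.1 h, Real.sSup_empty])
  · by_contra h
    exact hs (Real.sSup_of_not_bddAbove h)

theorem withDensity_ofReal_pos_of_isOpen {X : Type*} [TopologicalSpace X] [MeasurableSpace X]
    [OpensMeasurableSpace X] {ν : Measure X} [ν.IsOpenPosMeasure] {f : X → ℝ} (hf : Continuous f)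
    {U : Set X} (hU : IsOpen U) {x : X} (hxU : x ∈ U) (hx : 0 < f x) :
    0 < ν.withDensity (fun y => ENNReal.ofReal (f y)) U := by
  rw [pos_iff_ne_zero, ne_eq, withDensity_apply_eq_zero (by fun_prop)]
  simp only [ne_eq, ENNReal.ofReal_eq_zero, not_le]
  exact ((isOpen_lt continuous_const hf).inter hU).measure_ne_zero ν ⟨x, hx, hxU⟩

theorem exists_measure_Ioc_pos_of_isLUB {f : ℝ → ℝ} (hf : Continuous f) {c : ℝ}
    (hc : IsLUB {x | 0 < f x} c) {t : ℝ} (ht : t < c) :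
    ∃ s, t < s ∧ s < c ∧ 0 < volume.withDensity (fun x => ENNReal.ofReal (f x)) (Ioc t s) := by
  have hc' : c ∉ {x | 0 < f x} := hc.notMem_of_isOpen (isOpen_lt continuous_const hf)
  obtain ⟨x, hx, htx, hxc⟩ := hc.exists_between' hc' ht
  obtain ⟨s, -, hxs, hsc⟩ := hc.exists_between' hc' hxc
  exact ⟨s, htx.trans hxs, hsc, (withDensity_ofReal_pos_of_isOpen hf isOpen_Ioo
    ⟨htx, hxs⟩ hx).trans_le (measure_mono Ioo_subset_Ioc_self)⟩

theorem mul_measureReal_le_setIntegral_div {Ω : Type*} [MeasurableSpace Ω] {P : Measure Ω}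
    [IsProbabilityMeasure P] {A B : Set Ω} {g : Ω → ℝ} {δ : ℝ} (hB : MeasurableSet B)
    (hBA : B ⊆ A) (hg : Integrable g P) (hg0 : ∀ x, 0 ≤ g x) (hδ : ∀ x ∈ B, δ ≤ g x) :
    δ * P.real B ≤ (∫ x in A, g x ∂P) / P.real A := by
  rcases (measureReal_nonneg : 0 ≤ P.real A).eq_or_lt with hA | hA
  · have hB0 : P.real B = 0 := le_antisymm (hA ▸ measureReal_mono hBA) measureReal_nonneg
    simp [hB0, ← hA]
  calc δ * P.real B ≤ ∫ x in B, g x ∂P :=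
        setIntegral_ge_of_const_le_real hB (measure_ne_top P B) hδ hg.integrableOn
    _ ≤ ∫ x in A, g x ∂P :=
        setIntegral_mono_set hg.integrableOn (.of_forall hg0) hBA.eventuallyLE
    _ ≤ (∫ x in A, g x ∂P) / P.real A :=
        le_div_self (integral_nonneg hg0) hA measureReal_le_one

theorem integrable_ostat {n : ℕ} {μ : Measure ℝ} [IsFiniteMeasure μ] {a b : ℝ}
    (hμ : ∀ᵐ x ∂μ, x ∈ Icc a b) {k : ℕ} (hk : 1 ≤ k) (hkn : k ≤ n) :
    Integrable (fun v => ostat v k) (Measure.pi fun _ : Fin n => μ) :=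
  Integrable.of_mem_Icc a b (measurable_ostat hk hkn).aemeasurable <| by
    filter_upwards [ae_all_iff (ι := Fin n) |>.2 fun _ => Measure.tendsto_eval_ae_ae.eventually hμ]
      with v hv
    exact ostat_mem v hk hkn hv

theorem measureReal_pi_univ_cons_cons {m : ℕ} (μ : Measure ℝ) [SigmaFinite μ]
    (s₀ s₁ s : Set ℝ) :
    (Measure.pi fun _ : Fin (m + 2) => μ).real (univ.pi (Fin.cons s₀ (Fin.cons s₁ fun _ => s))) =
      μ.real s₀ * μ.real s₁ * μ.real s ^ m := by
  simp [measureReal_def, Measure.pi_pi, Fin.prod_univ_succ, ENNReal.toReal_mul, mul_assoc]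

theorem conditional_gap_lower_bound_general
    (μ : Measure ℝ) [IsProbabilityMeasure μ] (f : ℝ → ℝ)
    (hf : Continuous f)
    (hsupp : ∀ x, x ∉ Set.Icc (0 : ℝ) 1 → f x = 0)
    (hμ : μ = MeasureTheory.volume.withDensity fun x => ENNReal.ofReal (f x))
    (hsup : sSup {x | 0 < f x} = 1)
    (T : ℝ) (hT : T < 1) :
    ∃ η : ℝ, 0 < η ∧ ∃ K : ℝ, 0 < K ∧ ∀ n : ℕ, 2 ≤ n →
      K * ((μ (Set.Iic T)).toReal + η) ^ (n - 1) ≤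
        (∫ v in {v : Fin n → ℝ | T ≤ ostat v (n - 1)},
            (ostat v n - ostat v (n - 1)) ∂(Measure.pi fun _ : Fin n => μ)) /
          ((Measure.pi fun _ : Fin n => μ) {v : Fin n → ℝ | T ≤ ostat v (n - 1)}).toReal := by
  have hlub : IsLUB {x | 0 < f x} 1 := hsup ▸ Real.isLUB_sSup_of_ne_zero (hsup ▸ one_ne_zero)
  have hμ01 : ∀ᵐ x ∂μ, x ∈ Icc (0 : ℝ) 1 := by
    rw [hμ, ae_withDensity_iff (by fun_prop)]
    exact .of_forall fun x hx => by_contra fun h => hx (by simp [hsupp x h])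
  obtain ⟨T₀, hTT₀, hT₀, hη⟩ := exists_measure_Ioc_pos_of_isLUB hf hlub hT
  obtain ⟨a, hT₀a, ha, hq₂⟩ := exists_measure_Ioc_pos_of_isLUB hf hlub hT₀
  obtain ⟨b, hab, hb⟩ := exists_between ha
  obtain ⟨s, -, -, hq₁⟩ := exists_measure_Ioc_pos_of_isLUB hf hlub hb
  rw [← hμ] at hη hq₂ hq₁
  have hF : μ.real (Iic T) + μ.real (Ioc T T₀) = μ.real (Iic T₀) := by
    rw [← measureReal_union (Iic_disjoint_Ioc le_rfl) measurableSet_Ioc,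
      Iic_union_Ioc_eq_Iic hTT₀.le]
  have hK : 0 < (b - a) * μ.real (Ioc b s) * μ.real (Ioc T₀ a) :=
    mul_pos (mul_pos (sub_pos.2 hab) (ENNReal.toReal_pos hq₁.ne' (measure_ne_top μ _)))
      (ENNReal.toReal_pos hq₂.ne' (measure_ne_top μ _))
  refine ⟨μ.real (Ioc T T₀), ENNReal.toReal_pos hη.ne' (measure_ne_top μ _), _, hK,
    fun n hn => ?_⟩
  obtain ⟨m, rfl⟩ : ∃ m, n = m + 2 := ⟨n - 2, by omega⟩
  set B := univ.pi (Fin.cons (Ioc b s) (Fin.cons (Ioc T₀ a) fun _ => Iic T₀) :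
    Fin (m + 2) → Set ℝ)
  have hB0 : ∀ v ∈ B, b < v 0 := fun v hv => (hv 0 trivial).1
  have hB1 : ∀ v ∈ B, T₀ < v 1 := fun v hv => (hv 1 trivial).1
  have hBa : ∀ v ∈ B, ∀ j ≠ 0, v j ≤ a := by
    have hsub : ∀ j, (Fin.cons (Ioc T₀ a) fun _ => Iic T₀ : Fin (m + 1) → Set ℝ) j ⊆ Iic a :=
      Fin.cases Ioc_subset_Iic_self fun _ => Iic_subset_Iic.2 hT₀a.le
    intro v hv j hj
    obtain ⟨j, rfl⟩ := Fin.exists_succ_eq.2 hj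
    exact hsub j (hv j.succ trivial)
  have hBA : B ⊆ {v | T ≤ ostat v (m + 2 - 1)} := fun v hv =>
    le_ostat_sub_one v (i := 0) (j := 1) (by simp) (by linarith [hB0 v hv])
      (by linarith [hB1 v hv])
  have hgap : ∀ v ∈ B, b - a ≤ ostat v (m + 2) - ostat v (m + 2 - 1) := fun v hv => by
    linarith [apply_le_ostat_last v 0, hB0 v hv, ostat_sub_one_le v (by omega) 0 (hBa v hv)]
  calc _ ≤ (b - a) * μ.real (Ioc b s) * μ.real (Ioc T₀ a) * μ.real (Iic T₀) ^ m := by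
        rw [← measureReal_def, hF]
        exact mul_le_mul_of_nonneg_left
          (pow_le_pow_of_le_one measureReal_nonneg measureReal_le_one (by omega)) hK.le
    _ = (b - a) * (Measure.pi fun _ : Fin (m + 2) => μ).real B := by
        rw [measureReal_pi_univ_cons_cons]
        ring
    _ ≤ _ := mul_measureReal_le_setIntegral_div
        (.univ_pi <| Fin.cases measurableSet_Ioc <| Fin.cases measurableSet_Ioc fun _ =>
          measurableSet_Iic) hBA
        ((integrable_ostat hμ01 (by omega) le_rfl).sub (integrable_ostat hμ01 (by omega)
          (by omega)))
        (fun v => sub_nonneg.2 (ostat_mono v (by omega) (by omega) le_rfl)) hgap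

/-- For a distribution on `[0,1]` with continuous density whose support has
supremum `1`, and a threshold `T < 1` with `F(T) < 1`, there are constants
`η > 0` and `K > 0` such that for every `n ≥ 2`,
`E[Y_{(n:n)} − Y_{(n-1:n)} | Y_{(n-1:n)} ≥ T] ≥ K (F(T) + η)^{n−1}`. -/
theorem conditional_gap_lower_bound
    (μ : Measure ℝ) [IsProbabilityMeasure μ] (f : ℝ → ℝ)
    (hf : Continuous f) (hf0 : ∀ x, 0 ≤ f x)
    (hsupp : ∀ x, x ∉ Set.Icc (0 : ℝ) 1 → f x = 0)
    (hμ : μ = MeasureTheory.volume.withDensity fun x => ENNReal.ofReal (f x))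
    (hsup : sSup {x | 0 < f x} = 1)
    (T : ℝ) (hT : T < 1) (hFT : (μ (Set.Iic T)).toReal < 1) :
    ∃ η : ℝ, 0 < η ∧ ∃ K : ℝ, 0 < K ∧ ∀ n : ℕ, 2 ≤ n →
      K * ((μ (Set.Iic T)).toReal + η) ^ (n - 1) ≤
        (∫ v in {v : Fin n → ℝ | T ≤ ostat v (n - 1)},
            (ostat v n - ostat v (n - 1)) ∂(Measure.pi fun _ : Fin n => μ)) /
          ((Measure.pi fun _ : Fin n => μ) {v : Fin n → ℝ | T ≤ ostat v (n - 1)}).toReal :=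
  conditional_gap_lower_bound_general μ f hf hsupp hμ hsup T hT
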